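/- Suppose that ∫_Z u dμ ≤ 0 for every continuous convex function u : X → ℝ that is nondecreasing in each coordinate, ∫_W u dμ ≤ 0 for every continuous convex function u : X → ℝ that is nonincreasing in the first coordinate and nondecreasing in the second coordinate, and ∫_Y u dμ ≤ 0 for every continuous convex function u : X → ℝ that is nonincreasing in each coordinate. Then: (i) μ(Z) = μ(W) = μ(Y) = 0; (ii) for every t ∈ [a₁, p_g], ∫_t^{p_g} M_Z(s) ds ≥ 0, where M_Z(s) := μ(([a₁,s] × [a₂,b₂]) ∩ Z). -/

import Mathlib

open MeasureTheory Set

noncomputable section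

/-- The type rectangle `X = [a₁,b₁] × [a₂,b₂] ⊆ ℝ²`. -/
def rect (a₁ b₁ a₂ b₂ : ℝ) : Set (ℝ × ℝ) := Icc a₁ b₁ ×ˢ Icc a₂ b₂

/-- First partial derivative `∂₁f(x)`. -/
def d1 (f : ℝ × ℝ → ℝ) (x : ℝ × ℝ) : ℝ := deriv (fun s => f (s, x.2)) x.1

/-- Second partial derivative `∂₂f(x)`. -/
def d2 (f : ℝ × ℝ → ℝ) (x : ℝ × ℝ) : ℝ := deriv (fun s => f (x.1, s)) x.2

/-- The interior density of the transformed measure `μ`: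
`x₁·∂₁f(x) + (x₂+k)·∂₂f(x) + 3·f(x)`. -/
def dens (k : ℝ) (f : ℝ × ℝ → ℝ) (x : ℝ × ℝ) : ℝ :=
  x.1 * d1 f x + (x.2 + k) * d2 f x + 3 * f x

/-- The integral `∫ g dμ` of a function `g` against the transformed measure `μ` on
`X = [a₁,b₁] × [a₂,b₂]` with constant third-party payment `k`: a unit atom at the
lower-left corner `x̲ = (a₁,a₂)`, signed line densities on the four edges of `X`, and
(negated) interior density `dens k f` against two-dimensional Lebesgue measure. -/
def muInt (a₁ b₁ a₂ b₂ k : ℝ) (f g : ℝ × ℝ → ℝ) : ℝ :=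
  g (a₁, a₂)
    - (a₂ + k) * ∫ s in a₁..b₁, g (s, a₂) * f (s, a₂)
    + (b₂ + k) * ∫ s in a₁..b₁, g (s, b₂) * f (s, b₂)
    + b₁ * ∫ s in a₂..b₂, g (b₁, s) * f (b₁, s)
    - a₁ * ∫ s in a₂..b₂, g (a₁, s) * f (a₁, s)
    - ∫ x in rect a₁ b₁ a₂ b₂, g x * dens k f x

/-- `μ(A)` for a set `A ⊆ X`, obtained by integrating the indicator of `A` against `μ`. -/
def muSet (a₁ b₁ a₂ b₂ k : ℝ) (f : ℝ × ℝ → ℝ) (A : Set (ℝ × ℝ)) : ℝ :=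
  muInt a₁ b₁ a₂ b₂ k f (A.indicator 1)

/-- `u` is nondecreasing in the first coordinate on `X`. -/
def IncAlong1 (X : Set (ℝ × ℝ)) (u : ℝ × ℝ → ℝ) : Prop :=
  ∀ s s' t : ℝ, (s, t) ∈ X → (s', t) ∈ X → s ≤ s' → u (s, t) ≤ u (s', t)

/-- `u` is nondecreasing in the second coordinate on `X`. -/
def IncAlong2 (X : Set (ℝ × ℝ)) (u : ℝ × ℝ → ℝ) : Prop :=
  ∀ s t t' : ℝ, (s, t) ∈ X → (s, t') ∈ X → t ≤ t' → u (s, t) ≤ u (s, t')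

/-- `u` is nonincreasing in the first coordinate on `X`. -/
def DecAlong1 (X : Set (ℝ × ℝ)) (u : ℝ × ℝ → ℝ) : Prop :=
  ∀ s s' t : ℝ, (s, t) ∈ X → (s', t) ∈ X → s ≤ s' → u (s', t) ≤ u (s, t)

/-- `u` is nonincreasing in the second coordinate on `X`. -/
def DecAlong2 (X : Set (ℝ × ℝ)) (u : ℝ × ℝ → ℝ) : Prop :=
  ∀ s t t' : ℝ, (s, t) ∈ X → (s, t') ∈ X → t ≤ t' → u (s, t') ≤ u (s, t)

/-- The feasible class `𝒰`: continuous, convex, nondecreasing in each coordinate,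
and 1-Lipschitz with respect to the `ℓ¹` norm, on `X`. -/
def FeasibleU (X : Set (ℝ × ℝ)) (u : ℝ × ℝ → ℝ) : Prop :=
  ContinuousOn u X ∧ ConvexOn ℝ X u ∧ IncAlong1 X u ∧ IncAlong2 X u ∧
    ∀ x ∈ X, ∀ y ∈ X, |u x - u y| ≤ |x.1 - y.1| + |x.2 - y.2|

end

noncomputable section
/-- Region of types choosing the default option under the Ad-Tiered Posted Price. -/
def Zat (a₁ b₁ a₂ b₂ pg psb : ℝ) : Set (ℝ × ℝ) :=
  {x ∈ rect a₁ b₁ a₂ b₂ | x.1 ≤ pg ∧ x.2 ≤ psb - x.1}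

/-- Region of types choosing the ad-supported option under the Ad-Tiered Posted Price. -/
def Wat (a₁ b₁ a₂ b₂ pg psb : ℝ) : Set (ℝ × ℝ) :=
  {x ∈ rect a₁ b₁ a₂ b₂ | pg < x.1 ∧ x.2 ≤ psb - pg}

/-- Region of types choosing the ad-free option under the Ad-Tiered Posted Price. -/
def Yat (a₁ b₁ a₂ b₂ pg psb : ℝ) : Set (ℝ × ℝ) :=
  rect a₁ b₁ a₂ b₂ \ (Zat a₁ b₁ a₂ b₂ pg psb ∪ Wat a₁ b₁ a₂ b₂ pg psb)

/-- `M_Z(s) = μ(([a₁,s] × [a₂,b₂]) ∩ Z)` for the Ad-Tiered mechanism. -/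
def MZat (a₁ b₁ a₂ b₂ k : ℝ) (f : ℝ × ℝ → ℝ) (pg psb s : ℝ) : ℝ :=
  muSet a₁ b₁ a₂ b₂ k f ((Icc a₁ s ×ˢ Icc a₂ b₂) ∩ Zat a₁ b₁ a₂ b₂ pg psb)

end

/-!
Testing each dominance condition with the constant functions `1` and `-1` shows that `μ` vanishes
on `Z`, `W` and `Y`. For (ii), `1_{[a₁,s] × [a₂,b₂]}(x) = 1_{x₁ ≤ s}` on `Z`, so Fubini gives
`∫_t^{p_g} M_Z(s) ds = ∫_Z (p_g - max(t, x₁)) dμ = (p_g - t) μ(Z) - ∫_Z max(0, x₁ - t) dμ`,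
and `x ↦ max(0, x₁ - t)` is continuous, convex and nondecreasing in both coordinates.
-/

open intervalIntegral Function

theorem MeasureTheory.Integrable.bdd_mul_comp {α β : Type*} [MeasurableSpace α]
    [MeasurableSpace β] {ν : Measure α} {h : α → ℝ} (hh : Integrable h ν) {e : α → β}
    (he : Measurable e) {g : β → ℝ} (hg : Measurable g) {C : ℝ} (hgC : ∀ x, |g x| ≤ C) :
    Integrable (fun a => g (e a) * h a) ν :=
  hh.bdd_mul (hg.comp he).aestronglyMeasurable (ae_of_all _ fun a => hgC (e a))

theorem intervalIntegral_integral_mul_swap {α : Type*} [MeasurableSpace α] {ν : Measure α}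
    [SFinite ν] {h : α → ℝ} (hh : Integrable h ν) {F : ℝ → α → ℝ}
    (hF : Measurable (uncurry F)) {C : ℝ} (hFC : ∀ s a, |F s a| ≤ C) (t p : ℝ) :
    IntervalIntegrable (fun s => ∫ a, F s a * h a ∂ν) volume t p ∧
      ∫ s in t..p, ∫ a, F s a * h a ∂ν = ∫ a, (∫ s in t..p, F s a) * h a ∂ν := by
  have : IsFiniteMeasure (volume.restrict (uIoc t p)) :=
    isFiniteMeasure_restrict.2 measure_Ioc_lt_top.ne
  have hint : Integrable (uncurry fun s a => F s a * h a)
      ((volume.restrict (uIoc t p)).prod ν) :=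
    (hh.comp_snd _).bdd_mul hF.aestronglyMeasurable (ae_of_all _ fun z => hFC z.1 z.2)
  refine ⟨intervalIntegrable_iff.2 hint.integral_prod_left, ?_⟩
  simp_rw [intervalIntegral_integral_swap hint, intervalIntegral.integral_mul_const]

theorem measurable_intervalIntegral {β : Type*} [MeasurableSpace β] {F : ℝ → β → ℝ}
    (hF : Measurable (uncurry F)) (t p : ℝ) :
    Measurable fun x => ∫ s in t..p, F s x :=
  (hF.stronglyMeasurable.integral_prod_left.sub hF.stronglyMeasurable.integral_prod_left).measurable

theorem exists_forall_abs_indicator_le {α : Type*} [TopologicalSpace α] {S K : Set α}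
    (hSK : S ⊆ K) (hK : IsCompact K) {u : α → ℝ} (hu : ContinuousOn u K) :
    ∃ C, ∀ x, |S.indicator u x| ≤ C := by
  obtain ⟨C, hC⟩ := hK.exists_bound_of_continuousOn hu
  refine ⟨max C 0, fun x => ?_⟩
  by_cases hx : x ∈ S
  · rw [indicator_of_mem hx]
    exact (hC x (hSK hx)).trans (le_max_left _ _)
  · rw [indicator_of_notMem hx, abs_zero]
    exact le_max_right _ _

theorem intervalIntegral_indicator_Ici {x t p : ℝ} (hxp : x ≤ p) (htp : t ≤ p) :
    ∫ s in t..p, (Ici x).indicator 1 s = p - max t x := by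
  have hae : (Ici x).indicator (1 : ℝ → ℝ) =ᵐ[volume] (Ioi x).indicator 1 :=
    indicator_ae_eq_of_ae_eq_set Ioi_ae_eq_Ici.symm
  rw [integral_of_le htp, integral_congr_ae (ae_restrict_of_ae hae),
    setIntegral_indicator measurableSet_Ioi, Ioc_inter_Ioi]
  simp [Real.volume_real_Ioc_of_le (max_le htp hxp)]

theorem intervalIntegral_indicator_fst_le_inter {S : Set (ℝ × ℝ)} {t p : ℝ}
    (hS : ∀ x ∈ S, x.1 ≤ p) (htp : t ≤ p) :
    (fun x => ∫ s in t..p, ({y | y.1 ≤ s} ∩ S).indicator 1 x)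
      = (p - t) • S.indicator 1 - S.indicator fun x => max 0 (x.1 - t) := by
  ext x
  by_cases hx : x ∈ S
  · have hslice (s : ℝ) :
        ({y : ℝ × ℝ | y.1 ≤ s} ∩ S).indicator (1 : ℝ × ℝ → ℝ) x = (Ici x.1).indicator 1 s := by
      by_cases hs : x.1 ≤ s <;> simp [hs, hx]
    simp only [hslice, intervalIntegral_indicator_Ici (hS x hx) htp, Pi.sub_apply, Pi.smul_apply,
      indicator_of_mem hx, Pi.one_apply, smul_eq_mul, mul_one]
    rw [← sub_self t, max_sub_sub_right]
    ring
  · simp [hx]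

theorem measurable_uncurry_indicator_fst_le_inter {S : Set (ℝ × ℝ)} (hS : MeasurableSet S) :
    Measurable (uncurry fun s => ({y : ℝ × ℝ | y.1 ≤ s} ∩ S).indicator (1 : ℝ × ℝ → ℝ)) :=
  measurable_const.indicator
    ((measurableSet_le measurable_snd.fst measurable_fst).inter (measurable_snd hS))

theorem convexOn_max_zero_fst_sub {s : Set (ℝ × ℝ)} (hs : Convex ℝ s) (t : ℝ) :
    ConvexOn ℝ s fun x => max 0 (x.1 - t) :=
  (convexOn_const 0 hs).sup (((LinearMap.fst ℝ ℝ ℝ).convexOn hs).add_const (-t))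

theorem d1_eq_fderiv {f : ℝ × ℝ → ℝ} {x : ℝ × ℝ} (hf : DifferentiableAt ℝ f x) :
    d1 f x = fderiv ℝ f x (1, 0) :=
  (hf.hasFDerivAt.comp_hasDerivAt x.1
    ((hasDerivAt_id x.1).prodMk (hasDerivAt_const x.1 x.2))).deriv

theorem d2_eq_fderiv {f : ℝ × ℝ → ℝ} {x : ℝ × ℝ} (hf : DifferentiableAt ℝ f x) :
    d2 f x = fderiv ℝ f x (0, 1) :=
  (hf.hasFDerivAt.comp_hasDerivAt x.2
    ((hasDerivAt_const x.2 x.1).prodMk (hasDerivAt_id x.2))).deriv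

theorem ContDiffOn.continuousOn_dens {U : Set (ℝ × ℝ)} (hU : IsOpen U) {f : ℝ × ℝ → ℝ}
    (hf : ContDiffOn ℝ 1 f U) (k : ℝ) : ContinuousOn (dens k f) U := by
  have hf' : ContinuousOn (fderiv ℝ f) U := hf.continuousOn_fderiv_of_isOpen hU le_rfl
  have hdiff {x} (hx : x ∈ U) : DifferentiableAt ℝ f x :=
    (hf.differentiableOn one_ne_zero).differentiableAt (hU.mem_nhds hx)
  have hd1 : ContinuousOn (d1 f) U :=
    (hf'.clm_apply continuousOn_const).congr fun x hx => d1_eq_fderiv (hdiff hx)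
  have hd2 : ContinuousOn (d2 f) U :=
    (hf'.clm_apply continuousOn_const).congr fun x hx => d2_eq_fderiv (hdiff hx)
  exact ((continuous_fst.continuousOn.mul hd1).add
    ((continuous_snd.continuousOn.add continuousOn_const).mul hd2)).add
      (continuousOn_const.mul hf.continuousOn)

theorem Icc_prod_Icc_inter_of_subset {a₁ b₁ a₂ b₂ : ℝ} {S : Set (ℝ × ℝ)}
    (hS : S ⊆ rect a₁ b₁ a₂ b₂) (s : ℝ) :
    (Icc a₁ s ×ˢ Icc a₂ b₂) ∩ S = {y | y.1 ≤ s} ∩ S := by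
  ext x
  constructor
  · rintro ⟨⟨⟨-, hxs⟩, -⟩, hx⟩
    exact ⟨hxs, hx⟩
  · rintro ⟨hxs, hx⟩
    exact ⟨⟨⟨(hS hx).1.1, hxs⟩, (hS hx).2⟩, hx⟩

theorem measurableSet_Zat (a₁ b₁ a₂ b₂ pg psb : ℝ) : MeasurableSet (Zat a₁ b₁ a₂ b₂ pg psb) :=
  (measurableSet_Icc.prod measurableSet_Icc).inter
    ((measurableSet_le measurable_fst measurable_const).inter
      (measurableSet_le measurable_snd (measurable_const.sub measurable_fst)))

section

variable {a₁ b₁ a₂ b₂ k : ℝ} {f : ℝ × ℝ → ℝ}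

theorem convex_rect : Convex ℝ (rect a₁ b₁ a₂ b₂) := (convex_Icc _ _).prod (convex_Icc _ _)

theorem isCompact_rect : IsCompact (rect a₁ b₁ a₂ b₂) := isCompact_Icc.prod isCompact_Icc

theorem ContinuousOn.integrableOn_horizontal (hf : ContinuousOn f (rect a₁ b₁ a₂ b₂)) {y : ℝ}
    (hy : y ∈ Icc a₂ b₂) : IntegrableOn (fun s => f (s, y)) (Ioc a₁ b₁) :=
  ((hf.comp (continuous_id.prodMk continuous_const).continuousOn fun _ hs => ⟨hs, hy⟩)
    |>.integrableOn_Icc).mono_set Ioc_subset_Icc_self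

theorem ContinuousOn.integrableOn_vertical (hf : ContinuousOn f (rect a₁ b₁ a₂ b₂)) {x : ℝ}
    (hx : x ∈ Icc a₁ b₁) : IntegrableOn (fun s => f (x, s)) (Ioc a₂ b₂) :=
  ((hf.comp (continuous_const.prodMk continuous_id).continuousOn fun _ hs => ⟨hx, hs⟩)
    |>.integrableOn_Icc).mono_set Ioc_subset_Icc_self

theorem muInt_smul (c : ℝ) (g : ℝ × ℝ → ℝ) :
    muInt a₁ b₁ a₂ b₂ k f (c • g) = c * muInt a₁ b₁ a₂ b₂ k f g := by
  simp only [muInt, Pi.smul_apply, smul_eq_mul, mul_assoc, MeasureTheory.integral_const_mul,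
    ← mul_sub, mul_left_comm _ c, ← mul_add, intervalIntegral.integral_const_mul]

theorem muSet_eq_zero_of_forall_const {S : Set (ℝ × ℝ)}
    (h : ∀ c : ℝ, muInt a₁ b₁ a₂ b₂ k f (S.indicator fun _ => c) ≤ 0) :
    muSet a₁ b₁ a₂ b₂ k f S = 0 := by
  have hneg : S.indicator (fun _ => (-1 : ℝ)) = (-1 : ℝ) • S.indicator 1 := by
    ext x
    by_cases hx : x ∈ S <;> simp [hx]
  have h₁ : muSet a₁ b₁ a₂ b₂ k f S ≤ 0 := h 1
  have h₂ : -1 * muSet a₁ b₁ a₂ b₂ k f S ≤ 0 := by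
    rw [muSet, ← muInt_smul, ← hneg]
    exact h (-1)
  linarith

/-- Each `∫ s in _.._, …` in `muInt` binds up to the end of the expression, so the edge integrals
are nested; integrating out the constant tails produces these coefficients. -/
theorem muInt_eq (hab₁ : a₁ ≤ b₁) (hab₂ : a₂ ≤ b₂) (hf : ContinuousOn f (rect a₁ b₁ a₂ b₂))
    {g : ℝ × ℝ → ℝ} (hg : Measurable g) {C : ℝ} (hgC : ∀ x, |g x| ≤ C) :
    muInt a₁ b₁ a₂ b₂ k f g
      = g (a₁, a₂)
        - (a₂ + k) * (∫ s in Ioc a₁ b₁, g (s, a₂) * f (s, a₂))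
        - (a₂ + k) * ((b₁ - a₁) * (b₂ + k)) * (∫ s in Ioc a₁ b₁, g (s, b₂) * f (s, b₂))
        - (a₂ + k) * ((b₁ - a₁) * (b₂ + k)) * ((b₁ - a₁) * b₁) *
            (∫ s in Ioc a₂ b₂, g (b₁, s) * f (b₁, s))
        + (a₂ + k) * ((b₁ - a₁) * (b₂ + k)) * ((b₁ - a₁) * b₁) * ((b₂ - a₂) * a₁) *
            (∫ s in Ioc a₂ b₂, g (a₁, s) * f (a₁, s))
        - (a₂ + k) * ((b₁ - a₁) * (b₂ + k)) * ((b₁ - a₁) * b₁) * ((b₂ - a₂) * a₁) * (b₂ - a₂) *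
            (∫ x in rect a₁ b₁ a₂ b₂, g x * dens k f x) := by
  have horizontal {y} (hy : y ∈ Icc a₂ b₂) :
      IntervalIntegrable (fun s => g (s, y) * f (s, y)) volume a₁ b₁ :=
    (intervalIntegrable_iff_integrableOn_Ioc_of_le hab₁).2 <|
      (hf.integrableOn_horizontal hy).bdd_mul_comp (by fun_prop) hg hgC
  have vertical {x} (hx : x ∈ Icc a₁ b₁) :
      IntervalIntegrable (fun s => g (x, s) * f (x, s)) volume a₂ b₂ :=
    (intervalIntegrable_iff_integrableOn_Ioc_of_le hab₂).2 <|
      (hf.integrableOn_vertical hx).bdd_mul_comp (by fun_prop) hg hgC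
  unfold muInt
  rw [integral_sub (vertical (left_mem_Icc.2 hab₁)) intervalIntegrable_const,
    integral_sub (vertical (right_mem_Icc.2 hab₁)) intervalIntegrable_const,
    integral_add (horizontal (right_mem_Icc.2 hab₂)) intervalIntegrable_const,
    integral_add (horizontal (left_mem_Icc.2 hab₂)) intervalIntegrable_const]
  simp only [intervalIntegral.integral_const, smul_eq_mul]
  simp only [integral_of_le hab₁, integral_of_le hab₂]
  ring

theorem muInt_sub (hab₁ : a₁ ≤ b₁) (hab₂ : a₂ ≤ b₂) (hf : ContinuousOn f (rect a₁ b₁ a₂ b₂))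
    (hd : ContinuousOn (dens k f) (rect a₁ b₁ a₂ b₂)) {g₁ g₂ : ℝ × ℝ → ℝ}
    (hg₁ : Measurable g₁) {C₁ : ℝ} (hC₁ : ∀ x, |g₁ x| ≤ C₁)
    (hg₂ : Measurable g₂) {C₂ : ℝ} (hC₂ : ∀ x, |g₂ x| ≤ C₂) :
    muInt a₁ b₁ a₂ b₂ k f (g₁ - g₂) = muInt a₁ b₁ a₂ b₂ k f g₁ - muInt a₁ b₁ a₂ b₂ k f g₂ := by
  have integral_sub_mul {α : Type} [MeasurableSpace α] {ν : Measure α} {h : α → ℝ}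
      (hh : Integrable h ν) {e : α → ℝ × ℝ} (he : Measurable e) :
      ∫ a, (g₁ - g₂) (e a) * h a ∂ν = ∫ a, g₁ (e a) * h a ∂ν - ∫ a, g₂ (e a) * h a ∂ν := by
    simp only [Pi.sub_apply, sub_mul]
    exact integral_sub (hh.bdd_mul_comp he hg₁ hC₁) (hh.bdd_mul_comp he hg₂ hC₂)
  have hC (x : ℝ × ℝ) : |(g₁ - g₂) x| ≤ C₁ + C₂ :=
    (abs_sub _ _).trans (add_le_add (hC₁ x) (hC₂ x))
  rw [muInt_eq hab₁ hab₂ hf (hg₁.sub hg₂) hC, muInt_eq hab₁ hab₂ hf hg₁ hC₁,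
    muInt_eq hab₁ hab₂ hf hg₂ hC₂,
    integral_sub_mul (hf.integrableOn_horizontal (left_mem_Icc.2 hab₂)) measurable_prodMk_right,
    integral_sub_mul (hf.integrableOn_horizontal (right_mem_Icc.2 hab₂)) measurable_prodMk_right,
    integral_sub_mul (hf.integrableOn_vertical (right_mem_Icc.2 hab₁)) measurable_prodMk_left,
    integral_sub_mul (hf.integrableOn_vertical (left_mem_Icc.2 hab₁)) measurable_prodMk_left,
    integral_sub_mul (hd.integrableOn_compact (μ := volume) isCompact_rect) measurable_id']
  simp only [Pi.sub_apply]
  ring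

theorem intervalIntegral_muInt (hab₁ : a₁ ≤ b₁) (hab₂ : a₂ ≤ b₂)
    (hf : ContinuousOn f (rect a₁ b₁ a₂ b₂)) (hd : ContinuousOn (dens k f) (rect a₁ b₁ a₂ b₂))
    {F : ℝ → ℝ × ℝ → ℝ} (hF : Measurable (uncurry F)) {C : ℝ} (hFC : ∀ s x, |F s x| ≤ C)
    (t p : ℝ) :
    ∫ s in t..p, muInt a₁ b₁ a₂ b₂ k f (F s)
      = muInt a₁ b₁ a₂ b₂ k f (fun x => ∫ s in t..p, F s x) := by
  have hcorner : IntervalIntegrable (fun s => F s (a₁, a₂)) volume t p :=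
    intervalIntegrable_const.mono_fun' (hF.comp measurable_prodMk_right).aestronglyMeasurable
      (ae_of_all _ fun s => hFC s _)
  have hFe {β : Type} [MeasurableSpace β] {e : β → ℝ × ℝ} (he : Measurable e) :
      Measurable (uncurry fun s a => F s (e a)) :=
    hF.comp (measurable_fst.prodMk (he.comp measurable_snd))
  have bottom := intervalIntegral_integral_mul_swap
    (hf.integrableOn_horizontal (left_mem_Icc.2 hab₂)) (F := fun s σ => F s (σ, a₂))
    (hFe (by fun_prop)) (fun s _ => hFC s _) t p
  have top := intervalIntegral_integral_mul_swap
    (hf.integrableOn_horizontal (right_mem_Icc.2 hab₂)) (F := fun s σ => F s (σ, b₂))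
    (hFe (by fun_prop)) (fun s _ => hFC s _) t p
  have right := intervalIntegral_integral_mul_swap
    (hf.integrableOn_vertical (right_mem_Icc.2 hab₁)) (F := fun s σ => F s (b₁, σ))
    (hFe (by fun_prop)) (fun s _ => hFC s _) t p
  have left := intervalIntegral_integral_mul_swap
    (hf.integrableOn_vertical (left_mem_Icc.2 hab₁)) (F := fun s σ => F s (a₁, σ))
    (hFe (by fun_prop)) (fun s _ => hFC s _) t p
  have inner := intervalIntegral_integral_mul_swap
    (hd.integrableOn_compact (μ := volume) isCompact_rect) hF (fun s _ => hFC s _) t p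
  have hG : ∀ x, |∫ s in t..p, F s x| ≤ C * |p - t| := fun x =>
    norm_integral_le_of_norm_le_const (f := (F · x)) fun s _ => hFC s x
  have hFs (s : ℝ) : Measurable (F s) := hF.comp measurable_prodMk_left
  simp only [fun s => muInt_eq (k := k) hab₁ hab₂ hf (hFs s) (hFC s),
    muInt_eq hab₁ hab₂ hf (measurable_intervalIntegral hF t p) hG]
  rw [integral_sub (((((hcorner.sub (bottom.1.const_mul _)).sub (top.1.const_mul _)).sub
      (right.1.const_mul _)).add (left.1.const_mul _))) (inner.1.const_mul _),
    integral_add ((((hcorner.sub (bottom.1.const_mul _)).sub (top.1.const_mul _)).sub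
      (right.1.const_mul _))) (left.1.const_mul _),
    integral_sub (((hcorner.sub (bottom.1.const_mul _)).sub (top.1.const_mul _)))
      (right.1.const_mul _),
    integral_sub ((hcorner.sub (bottom.1.const_mul _))) (top.1.const_mul _),
    integral_sub hcorner (bottom.1.const_mul _)]
  simp only [intervalIntegral.integral_const_mul, bottom.2, top.2, right.2, left.2, inner.2]


theorem intervalIntegral_muSet_Icc_prod_Icc_inter (hab₁ : a₁ ≤ b₁) (hab₂ : a₂ ≤ b₂)
    (hf : ContinuousOn f (rect a₁ b₁ a₂ b₂)) (hd : ContinuousOn (dens k f) (rect a₁ b₁ a₂ b₂))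
    {S : Set (ℝ × ℝ)} (hS : MeasurableSet S) (hSX : S ⊆ rect a₁ b₁ a₂ b₂)
    {t p : ℝ} (hSp : ∀ x ∈ S, x.1 ≤ p) (htp : t ≤ p) :
    ∫ s in t..p, muSet a₁ b₁ a₂ b₂ k f ((Icc a₁ s ×ˢ Icc a₂ b₂) ∩ S)
      = (p - t) * muSet a₁ b₁ a₂ b₂ k f S
        - muInt a₁ b₁ a₂ b₂ k f (S.indicator fun x => max 0 (x.1 - t)) := by
  have hu : Continuous fun x : ℝ × ℝ => max 0 (x.1 - t) := by fun_prop
  obtain ⟨C, hC⟩ := exists_forall_abs_indicator_le hSX isCompact_rect hu.continuousOn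
  simp only [muSet, Icc_prod_Icc_inter_of_subset hSX]
  rw [intervalIntegral_muInt hab₁ hab₂ hf hd (measurable_uncurry_indicator_fst_le_inter hS)
      (C := 1) (fun s x => by by_cases hx : x ∈ {y : ℝ × ℝ | y.1 ≤ s} ∩ S <;> simp [hx]) t p,
    intervalIntegral_indicator_fst_le_inter hSp htp,
    muInt_sub hab₁ hab₂ hf hd ((measurable_one.indicator hS).const_smul _) (C₁ := |p - t|)
      (fun x => by by_cases hx : x ∈ S <;> simp [hx]) (hu.measurable.indicator hS) hC,
    muInt_smul]

end

theorem stmt15_general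
    (a₁ b₁ a₂ b₂ : ℝ) (hab₁ : a₁ < b₁) (hab₂ : a₂ < b₂)
    (U : Set (ℝ × ℝ)) (hU : IsOpen U) (hXU : rect a₁ b₁ a₂ b₂ ⊆ U)
    (f : ℝ × ℝ → ℝ) (hf : ContDiffOn ℝ 1 f U)
    (k : ℝ)
    (pg psb : ℝ)
    (HZ : ∀ u : ℝ × ℝ → ℝ,
      ContinuousOn u (rect a₁ b₁ a₂ b₂) → ConvexOn ℝ (rect a₁ b₁ a₂ b₂) u →
      IncAlong1 (rect a₁ b₁ a₂ b₂) u → IncAlong2 (rect a₁ b₁ a₂ b₂) u →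
      muInt a₁ b₁ a₂ b₂ k f ((Zat a₁ b₁ a₂ b₂ pg psb).indicator u) ≤ 0)
    (HW : ∀ u : ℝ × ℝ → ℝ,
      ContinuousOn u (rect a₁ b₁ a₂ b₂) → ConvexOn ℝ (rect a₁ b₁ a₂ b₂) u →
      DecAlong1 (rect a₁ b₁ a₂ b₂) u → IncAlong2 (rect a₁ b₁ a₂ b₂) u →
      muInt a₁ b₁ a₂ b₂ k f ((Wat a₁ b₁ a₂ b₂ pg psb).indicator u) ≤ 0)
    (HY : ∀ u : ℝ × ℝ → ℝ,
      ContinuousOn u (rect a₁ b₁ a₂ b₂) → ConvexOn ℝ (rect a₁ b₁ a₂ b₂) u →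
      DecAlong1 (rect a₁ b₁ a₂ b₂) u → DecAlong2 (rect a₁ b₁ a₂ b₂) u →
      muInt a₁ b₁ a₂ b₂ k f ((Yat a₁ b₁ a₂ b₂ pg psb).indicator u) ≤ 0) :
    muSet a₁ b₁ a₂ b₂ k f (Zat a₁ b₁ a₂ b₂ pg psb) = 0 ∧
    muSet a₁ b₁ a₂ b₂ k f (Wat a₁ b₁ a₂ b₂ pg psb) = 0 ∧
    muSet a₁ b₁ a₂ b₂ k f (Yat a₁ b₁ a₂ b₂ pg psb) = 0 ∧
    ∀ t ∈ Icc a₁ pg, 0 ≤ ∫ s in t..pg, MZat a₁ b₁ a₂ b₂ k f pg psb s := by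
  have hZ0 := muSet_eq_zero_of_forall_const fun c => HZ _ continuousOn_const
    (convexOn_const c convex_rect) (fun _ _ _ _ _ _ => le_rfl) (fun _ _ _ _ _ _ => le_rfl)
  refine ⟨hZ0, muSet_eq_zero_of_forall_const fun c => HW _ continuousOn_const
      (convexOn_const c convex_rect) (fun _ _ _ _ _ _ => le_rfl) (fun _ _ _ _ _ _ => le_rfl),
    muSet_eq_zero_of_forall_const fun c => HY _ continuousOn_const
      (convexOn_const c convex_rect) (fun _ _ _ _ _ _ => le_rfl) (fun _ _ _ _ _ _ => le_rfl),
    fun t ht => ?_⟩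
  have hfX : ContinuousOn f (rect a₁ b₁ a₂ b₂) := hf.continuousOn.mono hXU
  have hdX : ContinuousOn (dens k f) (rect a₁ b₁ a₂ b₂) := (hf.continuousOn_dens hU k).mono hXU
  simp only [MZat]
  rw [intervalIntegral_muSet_Icc_prod_Icc_inter hab₁.le hab₂.le hfX hdX
      (measurableSet_Zat a₁ b₁ a₂ b₂ pg psb) (fun x hx => hx.1) (fun x hx => hx.2.1) ht.2,
    hZ0, mul_zero, zero_sub, neg_nonneg]
  exact HZ _ (by fun_prop) (convexOn_max_zero_fst_sub convex_rect t)
    (fun _ _ _ _ _ h => max_le_max le_rfl (sub_le_sub_right h t)) (fun _ _ _ _ _ _ => le_rfl)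

/-- Proposition 3: necessary conditions for optimality of the Ad-Tiered Posted Price. -/
theorem stmt15
    (a₁ b₁ a₂ b₂ : ℝ) (ha₁ : 0 ≤ a₁) (hab₁ : a₁ < b₁) (hab₂ : a₂ < b₂) (hb₂ : b₂ ≤ 0)
    (U : Set (ℝ × ℝ)) (hU : IsOpen U) (hXU : rect a₁ b₁ a₂ b₂ ⊆ U)
    (f : ℝ × ℝ → ℝ) (hf : ContDiffOn ℝ 1 f U)
    (hfbd : ∃ C, ∀ x ∈ U, |d1 f x| ≤ C ∧ |d2 f x| ≤ C)
    (hfpos : ∀ x ∈ rect a₁ b₁ a₂ b₂, 0 < f x)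
    (hfint : (∫ x in rect a₁ b₁ a₂ b₂, f x) = 1)
    (k : ℝ) (hk : 0 ≤ k)
    (pg psb : ℝ) (hpg : pg ∈ Ioo a₁ b₁)
    (hpsb₁ : pg + a₂ ≤ psb) (hpsb₂ : psb ≤ min pg (a₁ + b₂))
    (HZ : ∀ u : ℝ × ℝ → ℝ,
      ContinuousOn u (rect a₁ b₁ a₂ b₂) → ConvexOn ℝ (rect a₁ b₁ a₂ b₂) u →
      IncAlong1 (rect a₁ b₁ a₂ b₂) u → IncAlong2 (rect a₁ b₁ a₂ b₂) u →
      muInt a₁ b₁ a₂ b₂ k f ((Zat a₁ b₁ a₂ b₂ pg psb).indicator u) ≤ 0)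
    (HW : ∀ u : ℝ × ℝ → ℝ,
      ContinuousOn u (rect a₁ b₁ a₂ b₂) → ConvexOn ℝ (rect a₁ b₁ a₂ b₂) u →
      DecAlong1 (rect a₁ b₁ a₂ b₂) u → IncAlong2 (rect a₁ b₁ a₂ b₂) u →
      muInt a₁ b₁ a₂ b₂ k f ((Wat a₁ b₁ a₂ b₂ pg psb).indicator u) ≤ 0)
    (HY : ∀ u : ℝ × ℝ → ℝ,
      ContinuousOn u (rect a₁ b₁ a₂ b₂) → ConvexOn ℝ (rect a₁ b₁ a₂ b₂) u →
      DecAlong1 (rect a₁ b₁ a₂ b₂) u → DecAlong2 (rect a₁ b₁ a₂ b₂) u →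
      muInt a₁ b₁ a₂ b₂ k f ((Yat a₁ b₁ a₂ b₂ pg psb).indicator u) ≤ 0) :
    muSet a₁ b₁ a₂ b₂ k f (Zat a₁ b₁ a₂ b₂ pg psb) = 0 ∧
    muSet a₁ b₁ a₂ b₂ k f (Wat a₁ b₁ a₂ b₂ pg psb) = 0 ∧
    muSet a₁ b₁ a₂ b₂ k f (Yat a₁ b₁ a₂ b₂ pg psb) = 0 ∧
    ∀ t ∈ Icc a₁ pg, 0 ≤ ∫ s in t..pg, MZat a₁ b₁ a₂ b₂ k f pg psb s :=
  stmt15_general a₁ b₁ a₂ b₂ hab₁ hab₂ U hU hXU f hf k pg psb HZ HW HY
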